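/- Let p be an odd prime, ω = e^{2πi/p}, and define f(x) = (x^{(p+1)/2} - 1)/(x-1) + (x-1) and g(x) = (x^{(p-1)/2} - 1)/(x-1) + x^{-1}(x-1). Then ∏_{j=0}^{p-1} (f(ω^j)f(ω^{-j}) - g(ω^j)g(ω^{-j})) = p^3. -/

import Mathlib

/-!
Write `p = 2k + 1`. At `ζ = 1` the factor is `(k + 1)² - k² = p`. For a nontrivial `p`-th root
of unity `ζ`, the element `s = ζ^(k+1)` satisfies `s² = ζ` and `ζ^k = s⁻¹`, so all four geometric
sums become rational functions of `s`, and the factor collapses to `(1 - ζ)² ζ⁻¹`. Over the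
nontrivial roots, `∏ (1 - ζ) = p`, while `∏ ζ = 1` because `p` is odd; hence the product is `p³`.
-/

open Finset

section
variable {K : Type*} [Field K]

def dihedralF (k : ℕ) (w : K) : K := ∑ i ∈ range (k + 1), w ^ i + (w - 1)

def dihedralG (k : ℕ) (w : K) : K := ∑ i ∈ range k, w ^ i + (1 - w⁻¹)

def dihedralFactor (k : ℕ) (w : K) : K :=
  dihedralF k w * dihedralF k w⁻¹ - dihedralG k w * dihedralG k w⁻¹

lemma dihedralFactor_one (k : ℕ) : dihedralFactor k (1 : K) = 2 * k + 1 := by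
  simp [dihedralFactor, dihedralF, dihedralG]
  ring

lemma dihedralFactor_of_pow_eq_one {k : ℕ} {ζ : K} (hζ : ζ ^ (2 * k + 1) = 1) (hζ1 : ζ ≠ 1) :
    dihedralFactor k ζ = (1 - ζ) ^ 2 * ζ⁻¹ := by
  have hζ0 : ζ ≠ 0 := by rintro rfl; simp at hζ
  set s := ζ ^ (k + 1) with hs
  have hs0 : s ≠ 0 := pow_ne_zero _ hζ0
  have hs2 : s ^ 2 = ζ := by
    rw [hs, ← pow_mul, show (k + 1) * 2 = 2 * k + 1 + 1 by ring, pow_succ, hζ, one_mul]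
  have hζk : ζ ^ k = s⁻¹ := eq_inv_of_mul_eq_one_left (by rw [← pow_add, ← hζ]; ring_nf)
  have hζ1' : ζ⁻¹ ≠ 1 := inv_ne_one.mpr hζ1
  rw [dihedralFactor, dihedralF, dihedralF, dihedralG, dihedralG, geom_sum_eq hζ1,
    geom_sum_eq hζ1, geom_sum_eq hζ1', geom_sum_eq hζ1', inv_pow, inv_pow, hζk, ← hs, inv_inv]
  rw [← hs2] at hζ1 ⊢
  have : s ^ 2 - 1 ≠ 0 := sub_ne_zero.mpr hζ1
  field_simp
  ring

lemma prod_range_pow_eq_one {M : Type*} [CommMonoid M] {ω : M} {k : ℕ}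
    (hω : ω ^ (2 * k + 1) = 1) : ∏ j ∈ range (2 * k + 1), ω ^ j = 1 := by
  have hsum : ∑ j ∈ range (2 * k + 1), j = (2 * k + 1) * k := by
    have := sum_range_id_mul_two (2 * k + 1)
    rw [Nat.add_sub_cancel] at this
    exact Nat.eq_of_mul_eq_mul_right two_pos (this.trans (by ring))
  rw [prod_pow_eq_pow_sum, hsum, pow_mul, hω, one_pow]

lemma IsPrimitiveRoot.prod_dihedralFactor {k : ℕ} {ω : K} (hω : IsPrimitiveRoot ω (2 * k + 1)) :
    ∏ j ∈ range (2 * k + 1), dihedralFactor k (ω ^ j) = (2 * k + 1) ^ 3 := by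
  have hfactor : ∀ j ∈ range (2 * k), dihedralFactor k (ω ^ (j + 1)) =
      (1 - ω ^ (j + 1)) ^ 2 * (ω ^ (j + 1))⁻¹ := fun j hj ↦
    dihedralFactor_of_pow_eq_one (by rw [← pow_mul, mul_comm, pow_mul, hω.pow_eq_one, one_pow])
      (hω.pow_ne_one_of_pos_of_lt j.succ_ne_zero (by simpa using hj))
  have hroots : ∏ j ∈ range (2 * k), ω ^ (j + 1) = 1 := by
    simpa [prod_range_succ'] using prod_range_pow_eq_one hω.pow_eq_one
  rw [prod_range_succ', prod_congr rfl hfactor, prod_mul_distrib, prod_pow, prod_inv_distrib,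
    hω.prod_one_sub_pow_eq_order, hroots, pow_zero, dihedralFactor_one]
  push_cast
  ring

end

theorem stmt19_general (p : ℕ) (hodd : Odd p)
    (ω : ℂ) (hω : ω = Complex.exp (2 * Real.pi * Complex.I / p))
    (f g : ℂ → ℂ)
    (hf : ∀ w : ℂ, f w = (∑ i ∈ Finset.range ((p + 1) / 2), w ^ i) + (w - 1))
    (hg : ∀ w : ℂ, g w = (∑ i ∈ Finset.range ((p - 1) / 2), w ^ i) + (1 - w⁻¹)) :
    (∏ j ∈ Finset.range p,
        (f (ω ^ j) * f ((ω ^ j)⁻¹) - g (ω ^ j) * g ((ω ^ j)⁻¹))) = (p : ℂ) ^ 3 := by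
  obtain ⟨k, rfl⟩ := hodd
  rw [show (2 * k + 1 + 1) / 2 = k + 1 by omega] at hf
  rw [show (2 * k + 1 - 1) / 2 = k by omega] at hg
  have hF : f = dihedralF k := funext hf
  have hG : g = dihedralG k := funext hg
  have hprim : IsPrimitiveRoot ω (2 * k + 1) := hω ▸ Complex.isPrimitiveRoot_exp _ (by omega)
  subst hF hG
  simpa [dihedralFactor] using hprim.prod_dihedralFactor

/-- For an odd prime `p` and `ω = e^{2πi/p}`, with
`f(x) = (x^{(p+1)/2} - 1)/(x - 1) + (x - 1) = (∑_{i < (p+1)/2} x^i) + (x - 1)` and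
`g(x) = (x^{(p-1)/2} - 1)/(x - 1) + x⁻¹(x - 1) = (∑_{i < (p-1)/2} x^i) + (1 - x⁻¹)`,
the dihedral determinant `∏_{j<p} (f(ω^j) f(ω^{-j}) - g(ω^j) g(ω^{-j}))` equals `p^3`. -/
theorem stmt19 (p : ℕ) (hp : p.Prime) (hodd : Odd p)
    (ω : ℂ) (hω : ω = Complex.exp (2 * Real.pi * Complex.I / p))
    (f g : ℂ → ℂ)
    (hf : ∀ w : ℂ, f w = (∑ i ∈ Finset.range ((p + 1) / 2), w ^ i) + (w - 1))
    (hg : ∀ w : ℂ, g w = (∑ i ∈ Finset.range ((p - 1) / 2), w ^ i) + (1 - w⁻¹)) :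
    (∏ j ∈ Finset.range p,
        (f (ω ^ j) * f ((ω ^ j)⁻¹) - g (ω ^ j) * g ((ω ^ j)⁻¹))) = (p : ℂ) ^ 3 :=
  stmt19_general p hodd ω hω f g hf hg
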